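/- arXiv:2508.08613 — 4 statements merged into one kernel-verified Lean document; each statement's English description precedes it below -/
import Mathlib

section
/- Let θ ∈ (0, π/2) and x ≥ 0. For z > 1 define D(x,z) := (1/(2θ)) · ( ∫_{α=−arctan x}^{θ} ((x·z + cos α)/(z + sin α) − x) dα + ∫_{α=arctan x}^{θ} ((x·z − cos α)/(z + sin α) − x) dα ). Then lim_{z→∞} z · D(x,z) = x·cos θ / θ, i.e. the function z ↦ z·D(x,z) tends to x·cos θ/θ as z → ∞. -/
/-
For z > 1 the integrands satisfy
z·((x z ± cos α)/(z + sin α) − x) = (±cos α − x sin α) · z/(z + sin α), and z/(z + sin α) → 1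
with |z/(z + sin α)| ≤ 2 for z ≥ 2, so by dominated convergence z·D(x,z) tends to
(1/2θ)(∫_{−arctan x}^θ (cos α − x sin α) dα + ∫_{arctan x}^θ (−cos α − x sin α) dα).
This equals x cos θ / θ because sin (arctan x) = x cos (arctan x).
-/

open Real Filter Set intervalIntegral

/-- The conditional expected one-step increment of the slope process in the
directional growth model. -/
noncomputable def growthDrift (θ x z : ℝ) : ℝ :=
  (1 / (2 * θ)) *
    ((∫ α in (-(Real.arctan x))..θ, ((x * z + Real.cos α) / (z + Real.sin α) - x)) +
     (∫ α in (Real.arctan x)..θ, ((x * z - Real.cos α) / (z + Real.sin α) - x)))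

open Topology

lemma tendsto_div_add_const_atTop (s : ℝ) :
    Tendsto (fun z : ℝ => z / (z + s)) atTop (𝓝 1) := by
  have h : Tendsto (fun z : ℝ => (1 + s / z)⁻¹) atTop (𝓝 1) := by
    simpa using (tendsto_const_nhds.add (tendsto_const_nhds.div_atTop tendsto_id)).inv₀
      (by norm_num : (1 : ℝ) + 0 ≠ 0)
  refine h.congr' ?_
  filter_upwards [eventually_gt_atTop 0, eventually_gt_atTop (-s)] with z hz hzs
  field_simp

lemma abs_div_add_sin_le_two {z : ℝ} (hz : 2 ≤ z) (α : ℝ) : |z / (z + sin α)| ≤ 2 := by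
  have hsin := neg_one_le_sin α
  rw [abs_div, abs_of_pos (by linarith), abs_of_pos (by linarith), div_le_iff₀ (by linarith)]
  linarith

lemma tendsto_integral_mul_div_add_sin {f : ℝ → ℝ} {a b : ℝ}
    (hf : IntervalIntegrable f MeasureTheory.volume a b) :
    Tendsto (fun z : ℝ => ∫ α in a..b, f α * (z / (z + sin α))) atTop (𝓝 (∫ α in a..b, f α)) := by
  refine tendsto_integral_filter_of_dominated_convergence (fun α => |f α| * 2) ?_ ?_
    (hf.abs.mul_const 2) ?_
  · filter_upwards [eventually_gt_atTop 1] with z hz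
    refine hf.def'.aestronglyMeasurable.mul (Continuous.aestronglyMeasurable ?_)
    exact continuous_const.div (continuous_const.add continuous_sin)
      fun α => by linarith [neg_one_le_sin α]
  · filter_upwards [eventually_ge_atTop 2] with z hz
    refine MeasureTheory.ae_of_all _ fun α _ => ?_
    rw [norm_mul, Real.norm_eq_abs, Real.norm_eq_abs]
    exact mul_le_mul_of_nonneg_left (abs_div_add_sin_le_two hz α) (abs_nonneg _)
  · refine MeasureTheory.ae_of_all _ fun α _ => ?_
    simpa using tendsto_const_nhds.mul (tendsto_div_add_const_atTop (sin α))

lemma mul_growthDrift_eventuallyEq (θ x : ℝ) :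
    (fun z => z * growthDrift θ x z) =ᶠ[atTop] fun z => (1 / (2 * θ)) *
      ((∫ α in (-arctan x)..θ, (cos α - x * sin α) * (z / (z + sin α))) +
       (∫ α in (arctan x)..θ, (-cos α - x * sin α) * (z / (z + sin α)))) := by
  filter_upwards [eventually_gt_atTop 1] with z hz
  have hpos : ∀ α, z + sin α ≠ 0 := fun α => by linarith [neg_one_le_sin α]
  rw [growthDrift, mul_left_comm, mul_add, ← integral_const_mul, ← integral_const_mul]
  congr 2 <;> refine integral_congr fun α _ => ?_ <;> field_simp [hpos α] <;> ring

lemma integral_mul_cos_sub_mul_sin (c x a b : ℝ) :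
    ∫ α in a..b, (c * cos α - x * sin α) = c * (sin b - sin a) + x * (cos b - cos a) := by
  rw [integral_sub (intervalIntegrable_cos.const_mul c) (intervalIntegrable_sin.const_mul x),
    integral_const_mul, integral_cos, integral_const_mul, integral_sin]
  ring

lemma sin_arctan_eq_mul_cos_arctan (x : ℝ) : sin (arctan x) = x * cos (arctan x) := by
  rw [sin_arctan, cos_arctan]
  ring

theorem stmt_0_general (θ x : ℝ) :
    Filter.Tendsto (fun z : ℝ => z * growthDrift θ x z) Filter.atTop
      (nhds (x * Real.cos θ / θ)) := by
  have hlim : (1 / (2 * θ)) * ((∫ α in (-arctan x)..θ, (cos α - x * sin α)) +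
      (∫ α in (arctan x)..θ, (-cos α - x * sin α))) = x * cos θ / θ := by
    have h₁ := integral_mul_cos_sub_mul_sin 1 x (-arctan x) θ
    have h₂ := integral_mul_cos_sub_mul_sin (-1) x (arctan x) θ
    simp only [one_mul, neg_one_mul] at h₁ h₂
    rw [h₁, h₂, sin_neg, cos_neg, sin_arctan_eq_mul_cos_arctan]
    ring
  rw [← hlim]
  refine Tendsto.congr' (mul_growthDrift_eventuallyEq θ x).symm ?_
  exact ((tendsto_integral_mul_div_add_sin (Continuous.intervalIntegrable (by fun_prop) _ _)).add
    (tendsto_integral_mul_div_add_sin (Continuous.intervalIntegrable (by fun_prop) _ _))).const_mul _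

theorem stmt_0 (θ x : ℝ) (hθ : θ ∈ Set.Ioo 0 (Real.pi / 2)) (hx : 0 ≤ x) :
    Filter.Tendsto (fun z : ℝ => z * growthDrift θ x z) Filter.atTop
      (nhds (x * Real.cos θ / θ)) :=
  stmt_0_general θ x
end

section
/- Let θ ∈ (0, π/2) and x ≥ 0. For z > 1 define D(x,z) := (1/(2θ)) · ( ∫_{α=−arctan x}^{θ} ((x·z + cos α)/(z + sin α) − x) dα + ∫_{α=arctan x}^{θ} ((x·z − cos α)/(z + sin α) − x) dα ) and F(x,z) := (1/(2θ)) · ( ∫_{α=−arctan x}^{θ} ((x·z + cos α)/(z + sin α) − x)² dα + ∫_{α=arctan x}^{θ} ((x·z − cos α)/(z + sin α) − x)² dα ). Then lim_{z→∞} z² · ( F(x,z) − D(x,z)² ) = (1/(2θ²)) · ( (x²+1)·θ² − 2x²·cos²θ − (x²−1)·θ·sin θ·cos θ ). -/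
open Real Filter Set intervalIntegral

/-- The conditional second moment of the one-step increment of the slope process in
the directional growth model. -/
noncomputable def growthSecondMoment (θ x z : ℝ) : ℝ :=
  (1 / (2 * θ)) *
    ((∫ α in (-(Real.arctan x))..θ, ((x * z + Real.cos α) / (z + Real.sin α) - x) ^ 2) +
     (∫ α in (Real.arctan x)..θ, ((x * z - Real.cos α) / (z + Real.sin α) - x) ^ 2))

open Topology

/-!
Since `(x z ± cos α) / (z + sin α) - x = (±cos α - x sin α) / (z + sin α)`, the scaled
increments `z (X_{n+1} - X_n)` converge boundedly to `±cos α - x sin α`, so by dominated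
convergence `z D` and `z² F` tend to `1/(2θ)` times the integrals of these limits and of their
squares. These integrals are elementary: the linear ones sum to `2 x cos θ` because
`sin (arctan x) = x cos (arctan x)`, and in the quadratic ones the boundary terms at `∓arctan x`
cancel, leaving `(1 + x²) θ + (1 - x²) sin θ cos θ`. The limit of `z² (F - D²) = z² F - (z D)²`
follows.
-/

lemma tendsto_mul_div_add_atTop (c s : ℝ) :
    Tendsto (fun z : ℝ => z * c / (z + s)) atTop (𝓝 c) := by
  have h : Tendsto (fun z : ℝ => c / (1 + s * z⁻¹)) atTop (𝓝 (c / (1 + s * 0))) :=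
    tendsto_const_nhds.div (tendsto_const_nhds.add (tendsto_inv_atTop_zero.const_mul s))
      (by simp)
  rw [mul_zero, add_zero, div_one] at h
  refine h.congr' ?_
  filter_upwards [eventually_gt_atTop |s|] with z hz
  have hz0 : 0 < z := (abs_nonneg s).trans_lt hz
  have hzs : 0 < z + s := by linarith [neg_abs_le s]
  field_simp

theorem tendsto_integral_mul_div_add_sin_pow {g : ℝ → ℝ} (hg : Continuous g) (u v : ℝ)
    (n : ℕ) :
    Tendsto (fun z => ∫ α in u..v, (z * g α / (z + sin α)) ^ n) atTop
      (𝓝 (∫ α in u..v, g α ^ n)) := by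
  obtain ⟨C, hC⟩ :=
    (isCompact_uIcc (a := u) (b := v)).exists_bound_of_continuousOn hg.continuousOn
  have hpos : ∀ z, 2 ≤ z → ∀ α, 0 < z + sin α := fun z hz α => by
    linarith [neg_one_le_sin α]
  refine tendsto_integral_filter_of_dominated_convergence (fun _ => (2 * C) ^ n) ?_ ?_
    intervalIntegrable_const ?_
  · filter_upwards [eventually_ge_atTop 2] with z hz
    exact (((continuous_const.mul hg).div (by fun_prop) fun α => (hpos z hz α).ne').pow
      n).aestronglyMeasurable
  · filter_upwards [eventually_ge_atTop 2] with z hz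
    refine .of_forall fun α hα => ?_
    have hzα := hpos z hz α
    have hgα := hC α (uIoc_subset_uIcc hα)
    rw [norm_pow]
    gcongr
    rw [norm_div, norm_mul, norm_of_nonneg (by linarith), norm_of_nonneg hzα.le,
      div_le_iff₀ hzα]
    -- `2 (z + sin α) ≥ z` once `z ≥ 2`
    nlinarith [mul_nonneg (sub_nonneg.2 hgα) (by linarith : (0 : ℝ) ≤ z),
      mul_nonneg ((norm_nonneg _).trans hgα)
        (by linarith [neg_one_le_sin α] : 0 ≤ z + 2 * sin α)]
  · exact .of_forall fun α _ => (tendsto_mul_div_add_atTop (g α) (sin α)).pow n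

noncomputable def growthMoment (θ x z : ℝ) (n : ℕ) : ℝ :=
  (1 / (2 * θ)) *
    ((∫ α in (-(arctan x))..θ, ((x * z + cos α) / (z + sin α) - x) ^ n) +
     (∫ α in (arctan x)..θ, ((x * z - cos α) / (z + sin α) - x) ^ n))

lemma growthMoment_one (θ x z : ℝ) : growthMoment θ x z 1 = growthDrift θ x z := by
  simp only [growthMoment, growthDrift, pow_one]

lemma growthMoment_two (θ x z : ℝ) : growthMoment θ x z 2 = growthSecondMoment θ x z := rfl

lemma mul_add_div_add_sub_eq_div {x z c s : ℝ} (h : z + s ≠ 0) :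
    (x * z + c) / (z + s) - x = (c - x * s) / (z + s) := by
  field_simp
  ring

lemma pow_mul_growthMoment_eventuallyEq (θ x : ℝ) (n : ℕ) :
    (fun z => z ^ n * growthMoment θ x z n) =ᶠ[atTop] fun z => (1 / (2 * θ)) *
      ((∫ α in (-arctan x)..θ, (z * (cos α - x * sin α) / (z + sin α)) ^ n) +
        ∫ α in (arctan x)..θ, (z * (-cos α - x * sin α) / (z + sin α)) ^ n) := by
  filter_upwards [eventually_gt_atTop 1] with z hz
  have hne : ∀ α, z + sin α ≠ 0 := fun α => by linarith [neg_one_le_sin α]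
  rw [growthMoment, mul_left_comm, mul_add, ← integral_const_mul, ← integral_const_mul]
  congr 2 <;> refine integral_congr fun α _ => ?_
  · simp only [← mul_pow, mul_add_div_add_sub_eq_div (hne α), mul_div_assoc]
  · simp only [← mul_pow, sub_eq_add_neg (x * z), mul_add_div_add_sub_eq_div (hne α),
      mul_div_assoc, neg_sub_left]

theorem tendsto_pow_mul_growthMoment (θ x : ℝ) (n : ℕ) :
    Tendsto (fun z => z ^ n * growthMoment θ x z n) atTop
      (𝓝 ((1 / (2 * θ)) * ((∫ α in (-arctan x)..θ, (cos α - x * sin α) ^ n) +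
        ∫ α in (arctan x)..θ, (-cos α - x * sin α) ^ n))) :=
  (((tendsto_integral_mul_div_add_sin_pow (by fun_prop) _ _ n).add
    (tendsto_integral_mul_div_add_sin_pow (by fun_prop) _ _ n)).const_mul _).congr'
    (pow_mul_growthMoment_eventuallyEq θ x n).symm

lemma integral_mul_cos_add_mul_sin (p q u v : ℝ) :
    ∫ α in u..v, (p * cos α + q * sin α) = p * (sin v - sin u) + q * (cos u - cos v) := by
  rw [integral_add (by apply Continuous.intervalIntegrable; fun_prop)
    (by apply Continuous.intervalIntegrable; fun_prop), integral_const_mul, integral_const_mul,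
    integral_cos, integral_sin]

lemma integral_mul_cos_add_mul_sin_sq (p q u v : ℝ) :
    ∫ α in u..v, (p * cos α + q * sin α) ^ 2 =
      (p ^ 2 + q ^ 2) * (v - u) / 2 + (p ^ 2 - q ^ 2) * (sin v * cos v - sin u * cos u) / 2
        + p * q * (sin v ^ 2 - sin u ^ 2) := by
  have hderiv : ∀ t ∈ uIcc u v, HasDerivAt
      (fun α => (p ^ 2 + q ^ 2) * α / 2 + (p ^ 2 - q ^ 2) * (sin α * cos α) / 2
        + p * q * sin α ^ 2) ((p * cos t + q * sin t) ^ 2) t := by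
    intro t _
    have h := ((((hasDerivAt_id t).const_mul (p ^ 2 + q ^ 2)).div_const 2).add
      ((((hasDerivAt_sin t).mul (hasDerivAt_cos t)).const_mul (p ^ 2 - q ^ 2)).div_const 2)).add
      (((hasDerivAt_sin t).pow 2).const_mul (p * q))
    refine h.congr_deriv ?_
    push_cast
    linear_combination -(p ^ 2 + q ^ 2) / 2 * sin_sq_add_cos_sq t
  rw [integral_eq_sub_of_hasDerivAt hderiv (by apply Continuous.intervalIntegrable; fun_prop)]
  ring

lemma integral_cos_sub_mul_sin_add_integral_neg_cos_sub_mul_sin (θ x : ℝ) :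
    (∫ α in (-arctan x)..θ, (cos α - x * sin α)) +
      ∫ α in (arctan x)..θ, (-cos α - x * sin α)
      = 2 * x * cos θ := by
  have h := integral_mul_cos_add_mul_sin 1 (-x) (-arctan x) θ
  have h' := integral_mul_cos_add_mul_sin (-1) (-x) (arctan x) θ
  simp only [one_mul, neg_mul, ← sub_eq_add_neg] at h h'
  rw [h, h', sin_neg, cos_neg, sin_arctan, cos_arctan]
  field_simp
  ring

lemma integral_cos_sub_mul_sin_sq_add_integral_neg_cos_sub_mul_sin_sq (θ x : ℝ) :
    (∫ α in (-arctan x)..θ, (cos α - x * sin α) ^ 2) +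
      ∫ α in (arctan x)..θ, (-cos α - x * sin α) ^ 2
      = (1 + x ^ 2) * θ + (1 - x ^ 2) * sin θ * cos θ := by
  have h := integral_mul_cos_add_mul_sin_sq 1 (-x) (-arctan x) θ
  have h' := integral_mul_cos_add_mul_sin_sq (-1) (-x) (arctan x) θ
  simp only [one_mul, neg_mul, ← sub_eq_add_neg] at h h'
  rw [h, h', sin_neg, cos_neg]
  ring

theorem stmt_3_general (θ x : ℝ) (hθ : θ ∈ Set.Ioo 0 (Real.pi / 2)) :
    Filter.Tendsto
      (fun z : ℝ => z ^ 2 * (growthSecondMoment θ x z - (growthDrift θ x z) ^ 2))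
      Filter.atTop
      (nhds ((1 / (2 * θ ^ 2)) *
        ((x ^ 2 + 1) * θ ^ 2 - 2 * x ^ 2 * Real.cos θ ^ 2
          - (x ^ 2 - 1) * θ * Real.sin θ * Real.cos θ))) := by
  have hD := tendsto_pow_mul_growthMoment θ x 1
  have hF := tendsto_pow_mul_growthMoment θ x 2
  simp only [pow_one, growthMoment_one,
    integral_cos_sub_mul_sin_add_integral_neg_cos_sub_mul_sin] at hD
  simp only [growthMoment_two,
    integral_cos_sub_mul_sin_sq_add_integral_neg_cos_sub_mul_sin_sq] at hF
  convert hF.sub (hD.pow 2) using 2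
  · ring
  · have hθ0 : θ ≠ 0 := hθ.1.ne'
    field_simp
    ring

theorem stmt_3 (θ x : ℝ) (hθ : θ ∈ Set.Ioo 0 (Real.pi / 2)) (hx : 0 ≤ x) :
    Filter.Tendsto
      (fun z : ℝ => z ^ 2 * (growthSecondMoment θ x z - (growthDrift θ x z) ^ 2))
      Filter.atTop
      (nhds ((1 / (2 * θ ^ 2)) *
        ((x ^ 2 + 1) * θ ^ 2 - 2 * x ^ 2 * Real.cos θ ^ 2
          - (x ^ 2 - 1) * θ * Real.sin θ * Real.cos θ))) :=
  stmt_3_general θ x hθ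
end

section
/- Let 0 < α < β be real numbers and set t_* := (β/α)^{1/(α−β)}. Then for all s ∈ (0, t_*/2) and all t ∈ (s, t_*): (t − s)^β + s^α − s^β ≤ t^α. -/
/-!
If `t - s ≤ s`, the inequality follows from monotonicity of `x ↦ x ^ α` and `x ↦ x ^ β`.
Otherwise `s ≤ t - s ≤ t_*`, and since `x ↦ x ^ α - x ^ β` increases on `[0, t_*]`,
`s ^ α - s ^ β ≤ (t - s) ^ α - (t - s) ^ β ≤ t ^ α - (t - s) ^ β`.
-/

open Real Set

lemma rpow_one_div_sub_rpow_sub {α β : ℝ} (hα : 0 < α) (hαβ : α < β) :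
    ((β / α) ^ (1 / (α - β))) ^ (β - α) = α / β := by
  have hexp : 1 / (α - β) * (β - α) = -1 := by
    field_simp [(sub_neg.mpr hαβ).ne]
    ring
  rw [← rpow_mul (div_pos (hα.trans hαβ) hα).le, hexp, rpow_neg_one, inv_div]

-- `(β / α) ^ (1 / (α - β))` is the critical point of `t ↦ t ^ α - t ^ β`.
theorem monotoneOn_rpow_sub_rpow {α β : ℝ} (hα : 0 < α) (hαβ : α < β) :
    MonotoneOn (fun t : ℝ => t ^ α - t ^ β) (Icc 0 ((β / α) ^ (1 / (α - β)))) := by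
  have hβ : 0 < β := hα.trans hαβ
  have hderiv : ∀ x : ℝ, 0 < x → HasDerivAt (fun t : ℝ => t ^ α - t ^ β)
      (α * x ^ (α - 1) - β * x ^ (β - 1)) x := fun x hx =>
    (hasDerivAt_rpow_const (Or.inl hx.ne')).sub (hasDerivAt_rpow_const (Or.inl hx.ne'))
  refine monotoneOn_of_hasDerivWithinAt_nonneg (convex_Icc _ _) ?_
    (fun x hx => (hderiv x (by rw [interior_Icc] at hx; exact hx.1)).hasDerivWithinAt) ?_
  · exact (continuousOn_id.rpow_const fun _ _ => Or.inr hα.le).sub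
      (continuousOn_id.rpow_const fun _ _ => Or.inr hβ.le)
  · intro x hx
    rw [interior_Icc] at hx
    obtain ⟨hx0, hxt⟩ := hx
    have hsmall : β * x ^ (β - α) ≤ α := by
      have := rpow_le_rpow hx0.le hxt.le (sub_pos.mpr hαβ).le
      rw [rpow_one_div_sub_rpow_sub hα hαβ] at this
      rwa [le_div_iff₀' hβ] at this
    have hsplit : x ^ (β - 1) = x ^ (β - α) * x ^ (α - 1) := by
      rw [← rpow_add hx0]; ring_nf
    rw [hsplit, sub_nonneg, ← mul_assoc]
    exact mul_le_mul_of_nonneg_right hsmall (rpow_nonneg hx0.le _)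

theorem stmt_10 (α β : ℝ) (hα : 0 < α) (hαβ : α < β)
    (tstar : ℝ) (htstar : tstar = (β / α) ^ (1 / (α - β)))
    (s t : ℝ) (hs : s ∈ Set.Ioo 0 (tstar / 2)) (ht : t ∈ Set.Ioo s tstar) :
    (t - s) ^ β + s ^ α - s ^ β ≤ t ^ α := by
  obtain ⟨hs0, -⟩ := hs
  obtain ⟨hst, htt⟩ := ht
  rcases le_total (t - s) s with hshort | hlong
  · have : (t - s) ^ β ≤ s ^ β := rpow_le_rpow (by linarith) hshort (hα.trans hαβ).le
    have : s ^ α ≤ t ^ α := rpow_le_rpow hs0.le hst.le hα.le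
    linarith
  · subst htstar
    have := monotoneOn_rpow_sub_rpow hα hαβ ⟨hs0.le, by linarith⟩ ⟨hs0.le.trans hlong, by linarith⟩ hlong
    simp only at this
    have : (t - s) ^ α ≤ t ^ α := rpow_le_rpow (by linarith) (by linarith) hα.le
    linarith
end

section
/- Let 0 < α < β be real numbers, set t_* := (β/α)^{1/(α−β)}, and let γ > 0. If s ∈ (0, t_*/2), t ∈ (s, t_*), and x is a real number with x ≤ γ·(s^α − s^β), then γ·(t − s)^β + x ≤ γ·t^α. -/
open Real Set

theorem stmt_11 (α β : ℝ) (hα : 0 < α) (hαβ : α < β)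
    (tstar : ℝ) (htstar : tstar = (β / α) ^ (1 / (α - β)))
    (γ : ℝ) (hγ : 0 < γ)
    (s t : ℝ) (hs : s ∈ Set.Ioo 0 (tstar / 2)) (ht : t ∈ Set.Ioo s tstar)
    (x : ℝ) (hx : x ≤ γ * (s ^ α - s ^ β)) :
    γ * (t - s) ^ β + x ≤ γ * t ^ α := by
  obtain ⟨hs0, hs2⟩ := hs
  obtain ⟨hst, htt⟩ := ht
  have hβ : 0 < β := hα.trans hαβ
  have hba : (0:ℝ) < β / α := by positivity
  -- tstar ^ (β - α) = α / β
  have htpow : tstar ^ (β - α) = α / β := by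
    rw [htstar, ← Real.rpow_mul hba.le]
    have : 1 / (α - β) * (β - α) = -1 := by
      field_simp
      rw [div_eq_iff (sub_ne_zero.mpr hαβ.ne)]
      ring
    rw [this, Real.rpow_neg_one, inv_div]
  have hmono : StrictMonoOn (fun u : ℝ => u ^ α - u ^ β) (Set.Ioo 0 tstar) := by
    apply strictMonoOn_of_deriv_pos (convex_Ioo 0 tstar)
    · exact (continuousOn_id.rpow_const fun x _ => Or.inr hα.le).sub
        (continuousOn_id.rpow_const fun x _ => Or.inr hβ.le)
    · intro u hu
      rw [interior_Ioo] at hu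
      have h1 : HasDerivAt (fun u : ℝ => u ^ α - u ^ β)
          (α * u ^ (α - 1) - β * u ^ (β - 1)) u := by
        have ha := Real.hasDerivAt_rpow_const (x := u) (p := α) (Or.inl hu.1.ne')
        have hb := Real.hasDerivAt_rpow_const (x := u) (p := β) (Or.inl hu.1.ne')
        exact ha.sub hb
      rw [h1.deriv]
      have hkey : u ^ (β - α) < α / β := by
        calc u ^ (β - α) < tstar ^ (β - α) :=
              Real.rpow_lt_rpow hu.1.le hu.2 (by linarith)
          _ = α / β := htpow
      have hsplit : u ^ (β - 1) = u ^ (β - α) * u ^ (α - 1) := by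
        rw [← Real.rpow_add hu.1]; ring_nf
      have hpos : (0:ℝ) < u ^ (α - 1) := Real.rpow_pos_of_pos hu.1 _
      rw [hsplit]
      have : β * (u ^ (β - α) * u ^ (α - 1)) < β * ((α / β) * u ^ (α - 1)) := by
        apply mul_lt_mul_of_pos_left _ hβ
        exact mul_lt_mul_of_pos_right hkey hpos
      have heq : β * ((α / β) * u ^ (α - 1)) = α * u ^ (α - 1) := by
        field_simp
      linarith [this, heq ▸ this]
  have hst' : s ∈ Set.Ioo 0 tstar := ⟨hs0, hst.trans htt⟩
  have htm : t ∈ Set.Ioo 0 tstar := ⟨hs0.trans hst, htt⟩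
  have hφ : s ^ α - s ^ β ≤ t ^ α - t ^ β := (hmono hst' htm hst).le
  have hts : (t - s) ^ β ≤ t ^ β :=
    Real.rpow_le_rpow (by linarith) (by linarith) hβ.le
  nlinarith [mul_le_mul_of_nonneg_left hφ hγ.le, mul_le_mul_of_nonneg_left hts hγ.le]
end
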